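/- Suppose 𝓕 is a system of local filters on λ, H ⊆ Q*_λ(𝓕) is ≤*-directed, fil(H) is an ultrafilter on λ, and ⟨δ_ξ : ξ < λ⟩ is an increasing continuous sequence of ordinals below λ with δ₀ = 0 such that for every club C ⊆ λ one has ∪{[δ_ξ, δ_{ξ+1}) : ξ ∈ C} ∈ fil(H). Then for every club C ⊆ λ and every p ∈ H, the set S(p,C) = {ξ ∈ C : there is (α,Z,F) ∈ p with [δ_ξ, δ_{ξ+1}) ∩ Z ∈ F⁺} is stationary in λ. -/

import Mathlib

namespace RS889

noncomputable section

open Cardinal Set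

universe u v

/-- `F` is a (proper) filter on the set `Z`, presented as the family of its members. -/
def IsFilterOn {α : Type u} (F : Set (Set α)) (Z : Set α) : Prop :=
  (∀ A ∈ F, A ⊆ Z) ∧ Z ∈ F ∧
    (∀ A ∈ F, ∀ B, A ⊆ B → B ⊆ Z → B ∈ F) ∧
    (∀ A ∈ F, ∀ B ∈ F, A ∩ B ∈ F) ∧ ∅ ∉ F

/-- The family `F⁺` of `F`-positive subsets of `Z`. -/
def posOf {α : Type u} (F : Set (Set α)) (Z : Set α) : Set (Set α) :=
  {B | B ⊆ Z ∧ ∀ C ∈ F, (B ∩ C).Nonempty}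

/-- `F` is an ultrafilter on the set `Z`. -/
def IsUltraOn {α : Type u} (F : Set (Set α)) (Z : Set α) : Prop :=
  IsFilterOn F Z ∧ ∀ A ⊆ Z, A ∈ F ∨ Z \ A ∈ F

/-- An unultra filter: every positive set splits into two positive pieces. -/
def Unultra {α : Type u} (F : Set (Set α)) (Z : Set α) : Prop :=
  ∀ A ∈ posOf F Z, ∃ B ⊆ A, B ∈ posOf F Z ∧ A \ B ∈ posOf F Z

/-- The sum `⊕^E_{x ∈ X} Fx x` of the filters `Fx x` on the sets `Z x` over a filter `E` on `X`. -/
def filSum {α : Type u} {β : Type v} (X : Set α) (E : Set (Set α))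
    (Z : α → Set β) (Fx : α → Set (Set β)) : Set (Set β) :=
  {A | A ⊆ (⋃ x ∈ X, Z x) ∧ {x | x ∈ X ∧ Z x ∩ A ∈ Fx x} ∈ E}

/-- The sum `⊕_{ζ<ξ} F ζ` over the filter of co-bounded subsets of `ξ`. -/
def cobddSum {α : Type u} (ξ : Ordinal.{0}) (Z : Ordinal.{0} → Set α)
    (F : Ordinal.{0} → Set (Set α)) : Set (Set α) :=
  {A | A ⊆ (⋃ ζ ∈ Set.Iio ξ, Z ζ) ∧ ∃ β < ξ, ∀ ζ, β ≤ ζ → ζ < ξ → Z ζ ∩ A ∈ F ζ}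

/-- A triple `(α, Z, F)`: an ordinal, a set of ordinals and a family of subsets of `Z`
(intended to be a filter on `Z`). -/
structure LocalFilter : Type 1 where
  a : Ordinal.{0}
  Z : Set Ordinal.{0}
  F : Set (Set Ordinal.{0})

/-- A system of local filters on `lam`. -/
def IsLFS (lam : Cardinal.{0}) (S : Set LocalFilter) : Prop :=
  (∀ t ∈ S, t.Z ⊆ Set.Iio lam.ord ∧ #t.Z < Cardinal.lift.{1} lam ∧
      IsLeast t.Z t.a ∧ IsFilterOn t.F t.Z) ∧
    ∀ β < lam.ord, ∃ t ∈ S, β ≤ t.a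

/-- The family `Q*_lam(S)`. -/
def Qstar (lam : Cardinal.{0}) (S : Set LocalFilter) : Set (Set LocalFilter) :=
  {r | r ⊆ S ∧ #r = Cardinal.lift.{1} lam ∧
    ∀ ξ : Ordinal.{0}, #{t | t ∈ r ∧ t.a = ξ} < Cardinal.lift.{1} lam}

/-- The filter `fil(r)` on `lam` generated by `r`. -/
def fil (lam : Cardinal.{0}) (r : Set LocalFilter) : Set (Set Ordinal.{0}) :=
  {A | A ⊆ Set.Iio lam.ord ∧ ∃ ε < lam.ord, ∀ t ∈ r, ε ≤ t.a → A ∩ t.Z ∈ t.F}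

/-- `r` is strongly disjoint. -/
def StronglyDisjoint (r : Set LocalFilter) : Prop :=
  (∀ s ∈ r, ∀ t ∈ r, s.a = t.a → s = t) ∧
    ∀ s ∈ r, ∀ t ∈ r, s.a < t.a → s.Z ⊆ Set.Iio t.a

/-- The family `Q⁰_lam(S)` of strongly disjoint members of `Q*_lam(S)`. -/
def Qzero (lam : Cardinal.{0}) (S : Set LocalFilter) : Set (Set LocalFilter) :=
  {r | r ∈ Qstar lam S ∧ StronglyDisjoint r}

/-- `fil(H) = ⋃ { fil(r) : r ∈ H }`. -/
def filH (lam : Cardinal.{0}) (H : Set (Set LocalFilter)) : Set (Set Ordinal.{0}) :=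
  {A | ∃ r ∈ H, A ∈ fil lam r}

/-- A uniform family of subsets of `lam`: every member has cardinality `lam`. -/
def IsUniform (lam : Cardinal.{0}) (D : Set (Set Ordinal.{0})) : Prop :=
  ∀ A ∈ D, #A = Cardinal.lift.{1} lam

/-- `C` is a club (closed unbounded) subset of `lam`. -/
def IsClub (lam : Cardinal.{0}) (C : Set Ordinal.{0}) : Prop :=
  C ⊆ Set.Iio lam.ord ∧ (∀ β < lam.ord, ∃ γ ∈ C, β < γ) ∧
    ∀ δ, δ < lam.ord → δ ≠ 0 → (∀ β < δ, ∃ γ ∈ C, β < γ ∧ γ < δ) → δ ∈ C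

/-- `St` is stationary in `lam`. -/
def IsStationary (lam : Cardinal.{0}) (St : Set Ordinal.{0}) : Prop :=
  ∀ C, IsClub lam C → (St ∩ C).Nonempty

/-- `D` is a weakly reasonable (ultra)filter on `lam`. -/
def WeaklyReasonable (lam : Cardinal.{0}) (D : Set (Set Ordinal.{0})) : Prop :=
  ∀ f : Ordinal.{0} → Ordinal.{0},
    (∀ δ < lam.ord, f δ < lam.ord) →
    (∀ δ δ', δ ≤ δ' → δ' < lam.ord → f δ ≤ f δ') →
    (∀ β < lam.ord, ∃ δ < lam.ord, β ≤ f δ) →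
    ∃ C, IsClub lam C ∧ (⋃ δ ∈ C, Set.Ico δ (δ + f δ)) ∉ D

/-- `e` is the increasing enumeration of `C ∪ {0}` (in order type `lam`). -/
def IsEnum (lam : Cardinal.{0}) (C : Set Ordinal.{0}) (e : Ordinal.{0} → Ordinal.{0}) : Prop :=
  (∀ ξ η, ξ < η → η < lam.ord → e ξ < e η) ∧
    (∀ ξ < lam.ord, e ξ ∈ insert 0 C) ∧
    ∀ γ ∈ insert 0 C, ∃ ξ < lam.ord, e ξ = γ

/-- The quotient `D/C`, where `e` is the increasing enumeration of `C ∪ {0}`. -/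
def quotFil (lam : Cardinal.{0}) (D : Set (Set Ordinal.{0})) (e : Ordinal.{0} → Ordinal.{0}) :
    Set (Set Ordinal.{0}) :=
  {A | A ⊆ Set.Iio lam.ord ∧ (⋃ ξ ∈ A, Set.Ico (e ξ) (e (ξ + 1))) ∈ D}

/-- `d` is an increasing continuous sequence of ordinals below `lam` (indexed by `ξ < lam`). -/
def IncrCont (lam : Cardinal.{0}) (d : Ordinal.{0} → Ordinal.{0}) : Prop :=
  (∀ ξ < lam.ord, d ξ < lam.ord) ∧
    (∀ ξ η, ξ < η → η < lam.ord → d ξ < d η) ∧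
    ∀ δ, δ < lam.ord → Order.IsSuccLimit δ → ∀ β < d δ, ∃ ξ < δ, β ≤ d ξ

/-- The full system `𝓕^ult` of local non-principal ultrafilters on `lam`. -/
def Fult (lam : Cardinal.{0}) : Set LocalFilter :=
  {t | t.a < lam.ord ∧ t.a ∈ t.Z ∧ t.Z ⊆ {o | t.a ≤ o ∧ o < lam.ord} ∧
      t.Z.Infinite ∧ #t.Z < Cardinal.lift.{1} lam ∧ IsUltraOn t.F t.Z ∧
      ∀ x : Ordinal.{0}, ({x} : Set Ordinal.{0}) ∉ t.F}

/-- `Σ(p)`. -/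
def SigmaP (lam : Cardinal.{0}) (p : Set LocalFilter) : Set LocalFilter :=
  {t | t ∈ Fult lam ∧ ∀ A ∈ t.F, ∃ s ∈ p, A ∩ s.Z ∈ s.F}

/-- A linked family `H ⊆ Q*_lam`. -/
def Linked (lam : Cardinal.{0}) (H : Set (Set LocalFilter)) : Prop :=
  H.Nonempty ∧ ∀ S : Set (Set LocalFilter), S ⊆ H → S.Finite → S.Nonempty →
    #{α : Ordinal.{0} | ∃ t : LocalFilter, t.a = α ∧ ∀ p ∈ S, t ∈ SigmaP lam p} =
      Cardinal.lift.{1} lam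

/-- A big family `H ⊆ Q*_lam`. -/
def Big (lam : Cardinal.{0}) (H : Set (Set LocalFilter)) : Prop :=
  H.Nonempty ∧ ∀ D ⊆ Fult lam, ∃ q ∈ H, q ⊆ D ∨ q ∩ D = ∅

/-- The condition `(⊕)^sum_S`. -/
def SumCond (lam : Cardinal.{0}) (S : Set LocalFilter) : Prop :=
  ∀ κ : Cardinal.{0}, ℵ₀ ≤ κ → κ < lam →
    ∀ t : Ordinal.{0} → LocalFilter,
      (∀ ξ < κ.ord, t ξ ∈ S) →
      (∀ ξ ζ, ξ < ζ → ζ < κ.ord → (t ξ).Z ⊆ Set.Iio (t ζ).a) →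
      ∃ E : Set (Set Ordinal.{0}), IsFilterOn E (Set.Iio κ.ord) ∧
        (∀ A ∈ E, #A = Cardinal.lift.{1} κ) ∧
        (LocalFilter.mk (t 0).a (⋃ ξ ∈ Set.Iio κ.ord, (t ξ).Z)
          (filSum (Set.Iio κ.ord) E (fun ξ => (t ξ).Z) (fun ξ => (t ξ).F))) ∈ S

/-- `(<lam⁺)`-completeness of a subfamily `Q` of `Q*` with respect to `≤*`. -/
def Complete (lam : Cardinal.{0}) (Q : Set (Set LocalFilter)) : Prop :=
  ∀ γ : Ordinal.{0}, γ.card ≤ lam →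
    ∀ p : Ordinal.{0} → Set LocalFilter,
      (∀ ξ < γ, p ξ ∈ Q) →
      (∀ ξ ζ, ξ ≤ ζ → ζ < γ → fil lam (p ξ) ⊆ fil lam (p ζ)) →
      ∃ q ∈ Q, ∀ ξ < γ, fil lam (p ξ) ⊆ fil lam q

/-- The full system `𝓕₀` of co-bounded filters on `lam`. -/
def Fcobdd (lam : Cardinal.{0}) : Set LocalFilter :=
  {t | t.a ∈ t.Z ∧ t.Z ⊆ {o | t.a ≤ o ∧ o < lam.ord} ∧
      #t.Z < Cardinal.lift.{1} lam ∧ sSup t.Z ∉ t.Z ∧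
      t.F = {A | A ⊆ t.Z ∧ ∃ β < sSup t.Z, ∀ x ∈ t.Z, β ≤ x → x ∈ A}}

/-- The `Ē`-closure of a system `S` of local filters (as an inductive family:
it is closed under `E κ`-sums of `κ`-sequences of previously obtained triples). -/
inductive EClos (lam : Cardinal.{0}) (E : Cardinal.{0} → Set (Set Ordinal.{0}))
    (S : Set LocalFilter) : LocalFilter → Prop
  | base : ∀ t ∈ S, EClos lam E S t
  | sum : ∀ κ : Cardinal.{0}, ℵ₀ ≤ κ → κ < lam →
      ∀ t : Ordinal.{0} → LocalFilter,
        (∀ ξ < κ.ord, EClos lam E S (t ξ)) →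
        (∀ ξ ζ, ξ < ζ → ζ < κ.ord → (t ξ).Z ⊆ Set.Iio (t ζ).a) →
        EClos lam E S (LocalFilter.mk (t 0).a (⋃ ξ ∈ Set.Iio κ.ord, (t ξ).Z)
          (filSum (Set.Iio κ.ord) (E κ) (fun ξ => (t ξ).Z) (fun ξ => (t ξ).F)))

/-- The full system `𝓕^unu` of local unultra filters on `lam`. -/
def Funu (lam : Cardinal.{0}) : Set LocalFilter :=
  {t | t.Z.Nonempty ∧ t.Z ⊆ Set.Iio lam.ord ∧ #t.Z < Cardinal.lift.{1} lam ∧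
      IsLeast t.Z t.a ∧ IsFilterOn t.F t.Z ∧ Unultra t.F t.Z}

/-- A pararegularity system for `F` (on `Z`), indexed by finite subsets of `κ`. -/
def PRSystem (κ : Cardinal.{0}) (F : Set (Set Ordinal.{0})) (Z : Set Ordinal.{0}) : Prop :=
  ∃ A : Finset Ordinal.{0} → Set Ordinal.{0},
    (∀ u : Finset Ordinal.{0}, ↑u ⊆ Set.Iio κ.ord → A u ∈ F) ∧
    (∀ u v : Finset Ordinal.{0}, ↑v ⊆ Set.Iio κ.ord → u ⊆ v → A v ⊆ A u) ∧
    (∀ U : Set Ordinal.{0}, U ⊆ Set.Iio κ.ord → U.Infinite →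
      (⋂ ξ ∈ U, A {ξ}) = ∅) ∧
    F = {B | B ⊆ Z ∧ ∃ u : Finset Ordinal.{0}, ↑u ⊆ Set.Iio κ.ord ∧ A u ⊆ B}

/-- `F` is a pararegular filter on `Z` (with `α = min Z`). -/
def Pararegular (lam : Cardinal.{0}) (F : Set (Set Ordinal.{0})) (Z : Set Ordinal.{0})
    (α : Ordinal.{0}) : Prop :=
  ∃ κ : Cardinal.{0}, (Ordinal.omega0 + α).card ≤ κ ∧ κ < lam ∧ PRSystem κ F Z

/-- `F` is a strongly pararegular filter on `Z` (with `α = min Z`). -/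
def StronglyPararegular (lam : Cardinal.{0}) (F : Set (Set Ordinal.{0})) (Z : Set Ordinal.{0})
    (α : Ordinal.{0}) : Prop :=
  ∃ κ : Cardinal.{0}, 2 ^ (Ordinal.omega0 + α).card ≤ κ ∧ κ < lam ∧ PRSystem κ F Z

/-- The full system `𝓕^pr` of local pararegular filters on `lam`. -/
def Fpr (lam : Cardinal.{0}) : Set LocalFilter :=
  {t | t.Z.Infinite ∧ t.Z ⊆ Set.Iio lam.ord ∧ #t.Z < Cardinal.lift.{1} lam ∧
      IsLeast t.Z t.a ∧ IsFilterOn t.F t.Z ∧ Pararegular lam t.F t.Z t.a}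

/-- The full system `𝓕^spr` of local strongly pararegular filters on `lam`. -/
def Fspr (lam : Cardinal.{0}) : Set LocalFilter :=
  {t | t.Z.Infinite ∧ t.Z ⊆ Set.Iio lam.ord ∧ #t.Z < Cardinal.lift.{1} lam ∧
      IsLeast t.Z t.a ∧ IsFilterOn t.F t.Z ∧ StronglyPararegular lam t.F t.Z t.a}

/-- The space `^lam lam`. -/
def Fn (lam : Cardinal.{0}) : Type 1 := ↥(Set.Iio lam.ord) → ↥(Set.Iio lam.ord)

/-- The basic open set `O_s` determined by a partial function `s` of length `γ`. -/
def basicOpen (lam : Cardinal.{0}) (γ : Ordinal.{0}) (s : Ordinal.{0} → Ordinal.{0}) : Set (Fn lam) :=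
  {f | ∀ ξ : ↥(Set.Iio lam.ord), (ξ : Ordinal.{0}) < γ → ((f ξ : Ordinal.{0}) = s ξ)}

/-- `X ⊆ ^lam lam` is nowhere dense. -/
def NwDense (lam : Cardinal.{0}) (X : Set (Fn lam)) : Prop :=
  ∀ γ < lam.ord, ∀ s : Ordinal.{0} → Ordinal.{0}, (∀ ξ < γ, s ξ < lam.ord) →
    ∃ γ', γ ≤ γ' ∧ γ' < lam.ord ∧ ∃ s' : Ordinal.{0} → Ordinal.{0},
      (∀ ξ < γ', s' ξ < lam.ord) ∧ (∀ ξ < γ, s' ξ = s ξ) ∧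
      basicOpen lam γ' s' ∩ X = ∅

/-- `X` belongs to the ideal `M^lam_{lam,lam}`: it is covered by `lam` many
nowhere dense sets. -/
def MeagerSet (lam : Cardinal.{0}) (X : Set (Fn lam)) : Prop :=
  ∃ A : Ordinal.{0} → Set (Fn lam), (∀ ξ < lam.ord, NwDense lam (A ξ)) ∧
    X ⊆ ⋃ ξ ∈ Set.Iio lam.ord, A ξ

/-- `cov(M^lam_{lam,lam})`. -/
def covM (lam : Cardinal.{0}) : Cardinal.{1} :=
  sInf {c | ∃ 𝓐 : Set (Set (Fn lam)), (∀ X ∈ 𝓐, MeagerSet lam X) ∧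
    ⋃₀ 𝓐 = Set.univ ∧ #𝓐 = c}

/-- Nodes of trees of sequences of ordinals: a pair (level, function). -/
abbrev TNode : Type 1 := Ordinal.{0} × (Ordinal.{0} → Ordinal.{0})

/-- Truncation of a function below `γ` (with value `0` elsewhere). -/
def truncF (γ : Ordinal.{0}) (f : Ordinal.{0} → Ordinal.{0}) : Ordinal.{0} → Ordinal.{0} :=
  fun ξ => if ξ < γ then f ξ else 0

/-- `T` is a tree of height `lam` of (normalized) sequences of ordinals `< lam`. -/
def IsTree (lam : Cardinal.{0}) (T : Set TNode) : Prop :=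
  (∀ x ∈ T, x.1 < lam.ord ∧ (∀ ξ < x.1, x.2 ξ < lam.ord) ∧ x.2 = truncF x.1 x.2) ∧
    ∀ x ∈ T, ∀ γ ≤ x.1, (γ, truncF γ x.2) ∈ T

/-- The `γ`-th level of `T`. -/
def treeLevel (T : Set TNode) (γ : Ordinal.{0}) : Set TNode := {x | x ∈ T ∧ x.1 = γ}

/-- `T` is a `lam`-Kurepa tree: a tree of height `lam` all of whose levels are
nonempty of cardinality `< lam`. -/
def IsKurepaTree (lam : Cardinal.{0}) (T : Set TNode) : Prop :=
  IsTree lam T ∧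
    ∀ γ < lam.ord, (treeLevel T γ).Nonempty ∧
      #(treeLevel T γ) < Cardinal.lift.{1} lam

/-- The set of `lam`-branches of `T` (normalized functions all of whose proper
initial segments lie in `T`). -/
def branches (lam : Cardinal.{0}) (T : Set TNode) : Set (Ordinal.{0} → Ordinal.{0}) :=
  {f | f = truncF lam.ord f ∧ ∀ γ < lam.ord, (γ, truncF γ f) ∈ T}


/-! If `S(p, C)` missed a club `C₁`, choose a club `D ⊆ C ∩ C₁` of limit ordinals `δ` such
that every triple of `p` with `α < d δ` lives below `d δ`; regularity of `λ` bounds the sets `Z`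
of the `< λ` many triples of `p` starting below a given point. A triple of `p` then meets only
the block `[d δ, d (δ + 1))`, `δ ∈ D`, that contains its `α`, and meets it in an `F`-null set
because `δ ∉ S(p, C)`. So the complement of the union of the blocks over `D` lies in
`fil(p) ⊆ fil(H)`, while the union itself lies in `fil(H)` by hypothesis. -/

section Filters

variable {α : Type u} {F : Set (Set α)} {Z A B : Set α}

theorem IsFilterOn.nonempty_of_mem_posOf (hF : IsFilterOn F Z) (hB : B ∈ posOf F Z) :
    B.Nonempty :=
  (hB.2 Z hF.2.1).mono inter_subset_left

theorem IsFilterOn.diff_mem_of_notMem_posOf (hF : IsFilterOn F Z) (hBZ : B ⊆ Z)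
    (hB : B ∉ posOf F Z) : Z \ B ∈ F := by
  obtain ⟨C, hC, hBC⟩ : ∃ C ∈ F, ¬(B ∩ C).Nonempty := by
    simpa [posOf, hBZ] using hB
  exact hF.2.2.1 C hC _ (fun x hx => ⟨hF.1 C hC hx, fun hxB => hBC ⟨x, hxB, hx⟩⟩)
    sdiff_subset

theorem IsFilterOn.diff_notMem (hF : IsFilterOn F Z) (hA : A ∈ F) : Z \ A ∉ F := fun h =>
  hF.2.2.2.2 (by simpa using hF.2.2.2.1 A hA _ h)

end Filters

theorem _root_.IsLeast.mem_Ico_of_inter_nonempty {β : Type u} [LinearOrder β] {Z : Set β}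
    {a l r : β} (ha : IsLeast Z a) (hZ : a < l → Z ⊆ Iio l) (hne : (Ico l r ∩ Z).Nonempty) :
    a ∈ Ico l r := by
  obtain ⟨w, ⟨hlw, hwr⟩, hwZ⟩ := hne
  exact ⟨not_lt.1 fun hal => (hZ hal hwZ).not_ge hlw, (ha.2 hwZ).trans_lt hwr⟩

variable {lam : Cardinal.{0}}

theorem exists_ord_bound_of_mk_lt (hreg : lam.IsRegular) {s : Set Ordinal.{0}}
    (hs : s ⊆ Iio lam.ord) (hcard : #s < Cardinal.lift.{1} lam) :
    ∃ b < lam.ord, s ⊆ Iio b := by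
  have hcof : #s < (Ordinal.lift.{1} lam.ord).cof := by
    rwa [Cardinal.lift_ord, hreg.lift.cof_ord]
  refine ⟨_, Ordinal.sSup_add_one_lt_of_lt_cof hcof hs, fun z hz => ?_⟩
  have hbdd : BddAbove ((· + 1) '' s) :=
    ⟨lam.ord, forall_mem_image.2 fun x hx => Order.add_one_le_of_lt (hs hx)⟩
  exact (Order.lt_add_one_iff.2 le_rfl).trans_le (le_csSup hbdd (mem_image_of_mem _ hz))

theorem mk_setOf_a_lt_of_mem_Qstar (hreg : lam.IsRegular) {F p : Set LocalFilter}
    (hp : p ∈ Qstar lam F) {β : Ordinal.{0}} (hβ : β < lam.ord) :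
    #{t | t ∈ p ∧ t.a < β} < Cardinal.lift.{1} lam := by
  have hunion : {t | t ∈ p ∧ t.a < β} = ⋃ ξ ∈ Iio β, {t | t ∈ p ∧ t.a = ξ} := by
    ext t
    simp
  rw [hunion, card_biUnion_lt_iff_forall_of_isRegular hreg.lift]
  · exact fun ξ _ => hp.2.2 ξ
  · rw [Cardinal.mk_Iio_ordinal, Cardinal.lift_lt]
    exact Cardinal.lt_ord.1 hβ

theorem exists_bound_Z_of_a_lt (hreg : lam.IsRegular) {F p : Set LocalFilter}
    (hF : IsLFS lam F) (hp : p ∈ Qstar lam F) {β : Ordinal.{0}} (hβ : β < lam.ord) :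
    ∃ b < lam.ord, ∀ t ∈ p, t.a < β → t.Z ⊆ Iio b := by
  have hZ : ∀ t ∈ p, t.Z ⊆ Iio lam.ord ∧ #t.Z < Cardinal.lift.{1} lam := fun t ht =>
    ⟨(hF.1 t (hp.1 ht)).1, (hF.1 t (hp.1 ht)).2.1⟩
  obtain ⟨b, hb, hsub⟩ := exists_ord_bound_of_mk_lt hreg
    (s := ⋃ t ∈ {t | t ∈ p ∧ t.a < β}, t.Z) (iUnion₂_subset fun t ht => (hZ t ht.1).1)
    ((card_biUnion_lt_iff_forall_of_isRegular hreg.lift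
      (mk_setOf_a_lt_of_mem_Qstar hreg hp hβ)).2 fun t ht => (hZ t ht.1).2)
  exact ⟨b, hb, fun t ht hta => (subset_biUnion_of_mem (u := LocalFilter.Z)
    (show t ∈ {t | t ∈ p ∧ t.a < β} from ⟨ht, hta⟩)).trans hsub⟩

namespace IncrCont

variable {d : Ordinal.{0} → Ordinal.{0}}

theorem le_apply (hd : IncrCont lam d) {ξ : Ordinal.{0}} (hξ : ξ < lam.ord) : ξ ≤ d ξ := by
  induction ξ using WellFoundedLT.induction with
  | _ ξ ih =>
    by_contra! h
    exact (ih (d ξ) h (h.trans hξ)).not_gt (hd.2.1 _ _ h hξ)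

theorem monotoneOn (hd : IncrCont lam d) {ξ η : Ordinal.{0}} (h : ξ ≤ η)
    (hη : η < lam.ord) : d ξ ≤ d η := by
  rcases h.lt_or_eq with h | rfl
  exacts [(hd.2.1 ξ η h hη).le, le_rfl]

theorem eq_of_mem_Ico (hd : IncrCont lam d) {δ δ' x : Ordinal.{0}} (hδ : δ < lam.ord)
    (hδ' : δ' < lam.ord)
    (hx : x ∈ Ico (d δ) (d (δ + 1))) (hx' : x ∈ Ico (d δ') (d (δ' + 1))) : δ = δ' := by
  rcases lt_trichotomy δ δ' with h | h | h
  · exact absurd ((hd.monotoneOn (Order.add_one_le_of_lt h) hδ').trans hx'.1) (not_le.2 hx.2)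
  · exact h
  · exact absurd ((hd.monotoneOn (Order.add_one_le_of_lt h) hδ).trans hx.1) (not_le.2 hx'.2)

end IncrCont

def closurePoints (lam : Cardinal.{0}) (g : Ordinal.{0} → Ordinal.{0}) : Set Ordinal.{0} :=
  {δ | δ < lam.ord ∧ Order.IsSuccLimit δ ∧ ∀ ξ < δ, g ξ < δ}

theorem closurePoints_anti {g g' : Ordinal.{0} → Ordinal.{0}} (h : g ≤ g') :
    closurePoints lam g' ⊆ closurePoints lam g :=
  fun _ ⟨hδ, hlim, hg⟩ => ⟨hδ, hlim, fun ξ hξ => (h ξ).trans_lt (hg ξ hξ)⟩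

theorem exists_gt_mem_closurePoints (hreg : lam.IsRegular) (hunc : ℵ₀ < lam)
    {g : Ordinal.{0} → Ordinal.{0}} (hg : ∀ ξ < lam.ord, g ξ < lam.ord)
    {β : Ordinal.{0}} (hβ : β < lam.ord) : ∃ δ ∈ closurePoints lam g, β < δ := by
  have hstep : ∀ x < lam.ord, ∃ y < lam.ord, x < y ∧ ∀ ξ < x, g ξ < y := by
    intro x hx
    obtain ⟨b, hb, hsub⟩ := exists_ord_bound_of_mk_lt hreg (s := g '' Iio x)
      (image_subset_iff.2 fun ξ hξ => hg ξ (hξ.trans hx))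
      (Cardinal.mk_image_le.trans_lt (by
        rw [Cardinal.mk_Iio_ordinal, Cardinal.lift_lt]
        exact Cardinal.lt_ord.1 hx))
    have hx1 : x + 1 < lam.ord := (Cardinal.isSuccLimit_ord hreg.aleph0_le).add_one_lt hx
    refine ⟨max (x + 1) b, max_lt hx1 hb,
      (Order.lt_add_one_iff.2 le_rfl).trans_le (le_max_left _ _), fun ξ hξ => ?_⟩
    exact (hsub (mem_image_of_mem g hξ)).trans_le (le_max_right _ _)
  choose! f hf using hstep
  have hiter : ∀ n, f^[n] β < lam.ord := fun n => by
    induction n with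
    | zero => exact hβ
    | succ n ih => rw [Function.iterate_succ_apply']; exact (hf _ ih).1
  have hnext : ∀ n, f (f^[n] β) ≤ Ordinal.nfp f β := fun n => by
    rw [← Function.iterate_succ_apply' f n β]
    exact Ordinal.iterate_le_nfp f β (n + 1)
  have hβδ : β < Ordinal.nfp f β := (hf β hβ).2.1.trans_le (hnext 0)
  refine ⟨Ordinal.nfp f β, ⟨?_, ?_, fun ξ hξ => ?_⟩, hβδ⟩
  · exact Ordinal.nfp_lt_ord (by rwa [hreg.cof_ord]) (fun x hx => (hf x hx).1) hβ
  · refine Ordinal.isSuccLimit_iff.2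
      ⟨hβδ.ne_bot, Order.isSuccPrelimit_of_succ_lt fun a ha => ?_⟩
    obtain ⟨n, hn⟩ := Ordinal.lt_nfp_iff.1 ha
    exact (Order.succ_le_of_lt hn).trans_lt ((hf _ (hiter n)).2.1.trans_le (hnext n))
  · obtain ⟨n, hn⟩ := Ordinal.lt_nfp_iff.1 hξ
    exact ((hf _ (hiter n)).2.2 ξ hn).trans_le (hnext n)

theorem isClub_closurePoints (hreg : lam.IsRegular) (hunc : ℵ₀ < lam)
    {g : Ordinal.{0} → Ordinal.{0}} (hg : ∀ ξ < lam.ord, g ξ < lam.ord) :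
    IsClub lam (closurePoints lam g) := by
  refine ⟨fun δ hδ => hδ.1, fun β hβ => exists_gt_mem_closurePoints hreg hunc hg hβ,
    fun δ hδ hδ0 hcof => ⟨hδ, ?_, fun ξ hξ => ?_⟩⟩
  · refine Ordinal.isSuccLimit_iff.2 ⟨hδ0, Order.isSuccPrelimit_of_succ_lt fun a ha => ?_⟩
    obtain ⟨γ, -, haγ, hγδ⟩ := hcof a ha
    exact (Order.succ_le_of_lt haγ).trans_lt hγδ
  · obtain ⟨γ, hγ, hξγ, hγδ⟩ := hcof ξ hξ
    exact (hγ.2.2 ξ hξγ).trans hγδ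

theorem IsClub.exists_closurePoints_subset {C : Set Ordinal.{0}} (hC : IsClub lam C) :
    ∃ g : Ordinal.{0} → Ordinal.{0}, (∀ ξ < lam.ord, g ξ < lam.ord) ∧
      closurePoints lam g ⊆ C := by
  choose! g hg using hC.2.1
  refine ⟨g, fun ξ hξ => hC.1 (hg ξ hξ).1, fun δ ⟨hδ, hlim, hgδ⟩ => ?_⟩
  exact hC.2.2 δ hδ hlim.ne_bot fun β hβ =>
    ⟨g β, (hg β (hβ.trans hδ)).1, (hg β (hβ.trans hδ)).2, hgδ β hβ⟩

theorem exists_closurePoints_Z_subset_Iio (hreg : lam.IsRegular) {F p : Set LocalFilter}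
    (hF : IsLFS lam F) (hp : p ∈ Qstar lam F) {d : Ordinal.{0} → Ordinal.{0}}
    (hd : IncrCont lam d) :
    ∃ g : Ordinal.{0} → Ordinal.{0}, (∀ ξ < lam.ord, g ξ < lam.ord) ∧
      ∀ δ ∈ closurePoints lam g, ∀ t ∈ p, t.a < d δ → t.Z ⊆ Iio (d δ) := by
  have hbound : ∀ ξ < lam.ord, ∃ b < lam.ord, ∀ t ∈ p, t.a < d ξ + 1 → t.Z ⊆ Iio b :=
    fun ξ hξ => exists_bound_Z_of_a_lt hreg hF hp
      ((Cardinal.isSuccLimit_ord hreg.aleph0_le).add_one_lt (hd.1 ξ hξ))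
  choose! g hg using hbound
  refine ⟨g, fun ξ hξ => (hg ξ hξ).1, fun δ ⟨hδ, hlim, hgδ⟩ t ht hta => ?_⟩
  obtain ⟨ξ, hξδ, haξ⟩ := hd.2.2 δ hδ hlim t.a hta
  calc t.Z ⊆ Iio (g ξ) := (hg ξ (hξδ.trans hδ)).2 t ht (Order.lt_add_one_iff.2 haξ)
    _ ⊆ Iio δ := Iio_subset_Iio (hgδ ξ hξδ).le
    _ ⊆ Iio (d δ) := Iio_subset_Iio (hd.le_apply hδ)

theorem compl_biUnion_Ico_mem_fil {F p : Set LocalFilter} (hF : IsLFS lam F) (hpF : p ⊆ F)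
    {d : Ordinal.{0} → Ordinal.{0}} (hd : IncrCont lam d) (hlam : lam ≠ 0)
    {D : Set Ordinal.{0}} (hD : D ⊆ Iio lam.ord)
    (hsep : ∀ δ ∈ D, ∀ t ∈ p, t.a < d δ → t.Z ⊆ Iio (d δ))
    (hnull : ∀ δ ∈ D, ∀ t ∈ p, Ico (d δ) (d (δ + 1)) ∩ t.Z ∉ posOf t.F t.Z) :
    Iio lam.ord \ ⋃ δ ∈ D, Ico (d δ) (d (δ + 1)) ∈ fil lam p := by
  refine ⟨sdiff_subset, 0, Cardinal.ord_pos.2 (pos_iff_ne_zero.2 hlam), fun t ht _ => ?_⟩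
  obtain ⟨hZ, -, hleast, hfil⟩ := hF.1 t (hpF ht)
  set A := ⋃ δ ∈ D, Ico (d δ) (d (δ + 1))
  have hmem : ∀ w ∈ A, w ∈ t.Z →
      ∃ δ ∈ D, w ∈ Ico (d δ) (d (δ + 1)) ∧ t.a ∈ Ico (d δ) (d (δ + 1)) :=
    fun w hwA hwZ => by
      obtain ⟨δ, hδ, hw⟩ := mem_iUnion₂.1 hwA
      exact ⟨δ, hδ, hw, hleast.mem_Ico_of_inter_nonempty (hsep δ hδ t ht) ⟨w, hw, hwZ⟩⟩
  have hA : A ∩ t.Z ∉ posOf t.F t.Z := by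
    intro hpos
    obtain ⟨w, hwA, hwZ⟩ := hfil.nonempty_of_mem_posOf hpos
    obtain ⟨δ, hδ, -, hδa⟩ := hmem w hwA hwZ
    refine hnull δ hδ t ht ⟨inter_subset_right, fun W hW => (hpos.2 W hW).mono ?_⟩
    rintro v ⟨⟨hvA, hvZ⟩, hvW⟩
    obtain ⟨δ', hδ', hv, hδ'a⟩ := hmem v hvA hvZ
    obtain rfl := hd.eq_of_mem_Ico (hD hδ') (hD hδ) hδ'a hδa
    exact ⟨⟨hv, hvZ⟩, hvW⟩
  convert hfil.diff_mem_of_notMem_posOf inter_subset_right hA using 1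
  ext w
  constructor
  · rintro ⟨⟨-, hwA⟩, hwZ⟩
    exact ⟨hwZ, fun h => hwA h.1⟩
  · rintro ⟨hwZ, hw⟩
    exact ⟨⟨hZ hwZ, fun hwA => hw ⟨hwA, hwZ⟩⟩, hwZ⟩

theorem stmt8_general (lam : Cardinal.{0}) (hreg : lam.IsRegular) (hunc : ℵ₀ < lam)
    (F : Set LocalFilter) (hF : IsLFS lam F)
    (H : Set (Set LocalFilter)) (hH : H ⊆ Qstar lam F)
    (hult : IsUltraOn (filH lam H) (Set.Iio lam.ord))
    (d : Ordinal.{0} → Ordinal.{0}) (hd : IncrCont lam d)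
    (hclub : ∀ C, IsClub lam C →
      (⋃ ξ ∈ C, Set.Ico (d ξ) (d (ξ + 1))) ∈ filH lam H) :
    ∀ C, IsClub lam C → ∀ p ∈ H,
      IsStationary lam
        {ξ | ξ ∈ C ∧ ∃ t ∈ p, Set.Ico (d ξ) (d (ξ + 1)) ∩ t.Z ∈ posOf t.F t.Z} := by
  intro C hC p hp C₁ hC₁
  obtain ⟨g, hg, hgC⟩ := hC.exists_closurePoints_subset
  obtain ⟨g₁, hg₁, hgC₁⟩ := hC₁.exists_closurePoints_subset
  obtain ⟨g₂, hg₂, hsep⟩ := exists_closurePoints_Z_subset_Iio hreg hF (hH hp) hd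
  set D := closurePoints lam (g ⊔ g₁ ⊔ g₂)
  have hD : IsClub lam D := isClub_closurePoints hreg hunc fun ξ hξ =>
    max_lt (max_lt (hg ξ hξ) (hg₁ ξ hξ)) (hg₂ ξ hξ)
  have hDC : D ⊆ C := (closurePoints_anti (le_sup_left.trans le_sup_left)).trans hgC
  have hDC₁ : D ⊆ C₁ := (closurePoints_anti (le_sup_right.trans le_sup_left)).trans hgC₁
  by_contra hS
  have hcompl : Iio lam.ord \ ⋃ δ ∈ D, Ico (d δ) (d (δ + 1)) ∈ fil lam p :=
    compl_biUnion_Ico_mem_fil hF (hH hp).1 hd hreg.pos.ne' hD.1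
      (fun δ hδ => hsep δ (closurePoints_anti le_sup_right hδ))
      fun δ hδ t ht hpos => hS ⟨δ, ⟨hDC hδ, t, ht, hpos⟩, hDC₁ hδ⟩
  exact hult.1.diff_notMem (hclub D hD) ⟨p, hp, hcompl⟩

/-- Claim 1.10.1: each set `S(p,C)` is stationary. -/
theorem stmt8 (lam : Cardinal.{0}) (hreg : lam.IsRegular) (hunc : ℵ₀ < lam)
    (F : Set LocalFilter) (hF : IsLFS lam F)
    (H : Set (Set LocalFilter)) (hH : H ⊆ Qstar lam F)
    (hdir : ∀ p ∈ H, ∀ q ∈ H, ∃ r ∈ H, fil lam p ⊆ fil lam r ∧ fil lam q ⊆ fil lam r)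
    (hult : IsUltraOn (filH lam H) (Set.Iio lam.ord))
    (d : Ordinal.{0} → Ordinal.{0}) (hd : IncrCont lam d) (hd0 : d 0 = 0)
    (hclub : ∀ C, IsClub lam C →
      (⋃ ξ ∈ C, Set.Ico (d ξ) (d (ξ + 1))) ∈ filH lam H) :
    ∀ C, IsClub lam C → ∀ p ∈ H,
      IsStationary lam
        {ξ | ξ ∈ C ∧ ∃ t ∈ p, Set.Ico (d ξ) (d (ξ + 1)) ∩ t.Z ∈ posOf t.F t.Z} :=
  stmt8_general lam hreg hunc F hF H hH hult d hd hclub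

end

end RS889
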